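/- Let n ≥ 4 be even and let I ⊆ {1,…,n} be nonempty. If n ≡ 0 (mod 4), then the set of I-canonical elements for the lattice 𝔍_{−w} of Spin(2n)/{1,−w} equals the set of I-canonical elements for the lattice 𝔍_Spin of Spin(2n). If n ≡ 2 (mod 4), then the set of I-canonical elements for 𝔍_{−w} equals the set of I-canonical elements for the lattice 𝔍_w of Spin(2n)/{1,w}. -/

import Mathlib

/-- The duals of the simple roots of `so(2n)` (1-based index):
`H_i = E_1+⋯+E_i` for `i ≤ n-2`, `H_{n-1} = (E_1+⋯+E_{n-1}-E_n)/2`,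
`H_n = (E_1+⋯+E_{n-1}+E_n)/2`. -/
noncomputable def Hso (n i : ℕ) : Fin n → ℝ :=
  if i = n - 1 then (fun j => if (j : ℕ) + 2 ≤ n then 1 / 2 else -(1 / 2))
  else if i = n then (fun _ => 1 / 2)
  else fun j => if (j : ℕ) + 1 ≤ i then 1 else 0

/-- `ε^i_I = 1` if `|I ∩ {n-1, n}| = i`, and `0` otherwise. -/
def epsI (n : ℕ) (I : Finset ℕ) (i : ℕ) : ℕ :=
  if (I ∩ {n - 1, n}).card = i then 1 else 0

/-- The integer lattice of `Spin(2n)`: integer vectors with even coordinate sum. -/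
def JSpin (n : ℕ) : Set (Fin n → ℝ) :=
  {v | ∃ a : Fin n → ℤ, (∀ j, v j = a j) ∧ Even (∑ j, a j)}

/-- The set of `I`-canonical elements for a lattice `𝔏 ⊆ ℝ^n`. -/
def ICanonSet (n : ℕ) (𝔏 : Set (Fin n → ℝ)) (H : ℕ → Fin n → ℝ) (I : Finset ℕ) :
    Set (Fin n → ℝ) :=
  {ξ | ∃ c : ℕ → ℕ, (∀ i ∈ I, 1 ≤ c i) ∧ ξ = ∑ i ∈ I, c i • H i ∧ ξ ∈ 𝔏 ∧
    ∀ c' : ℕ → ℕ, (∀ i ∈ I, 1 ≤ c' i ∧ c' i ≤ c i) →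
      (∑ i ∈ I, c' i • H i) ∈ 𝔏 → (∑ i ∈ I, c' i • H i) = ξ}

/-- Highest weights of the representations of `Spin(2n)` descending to
`Spin(2n)/{1,w}`. -/
def IsWWeight (n : ℕ) (lam : Fin n → ℝ) : Prop :=
  (∀ j k : Fin n, (j : ℕ) ≤ (k : ℕ) → (k : ℕ) + 2 ≤ n → lam k ≤ lam j) ∧
  (∀ j k : Fin n, (j : ℕ) + 2 ≤ n → (k : ℕ) + 1 = n → |lam k| ≤ lam j) ∧
  ((∀ j, ∃ m : ℤ, lam j = m) ∨ (∀ j, ∃ m : ℤ, lam j = m + 1 / 2)) ∧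
  (∃ m : ℤ, ∑ j, lam j = 2 * m)

/-- Highest weights of the representations of `Spin(2n)` descending to
`Spin(2n)/{1,-w}`: `λ_1 ≥ … ≥ λ_{n-1} ≥ |λ_n|`, all `λ_i` integers or all
half-integers, and `λ_1 + ⋯ + λ_n - n/2` an odd integer. -/
def IsNegWWeight (n : ℕ) (lam : Fin n → ℝ) : Prop :=
  (∀ j k : Fin n, (j : ℕ) ≤ (k : ℕ) → (k : ℕ) + 2 ≤ n → lam k ≤ lam j) ∧
  (∀ j k : Fin n, (j : ℕ) + 2 ≤ n → (k : ℕ) + 1 = n → |lam k| ≤ lam j) ∧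
  ((∀ j, ∃ m : ℤ, lam j = m) ∨ (∀ j, ∃ m : ℤ, lam j = m + 1 / 2)) ∧
  (∃ m : ℤ, Odd m ∧ ∑ j, lam j = m + (n : ℝ) / 2)

/-- The integer lattice of `Spin(2n)/{1,w}`. -/
def Jw (n : ℕ) : Set (Fin n → ℝ) :=
  {ξ | ∀ lam : Fin n → ℝ, IsWWeight n lam → ∃ m : ℤ, ∑ j, lam j * ξ j = m}

/-- The integer lattice of `Spin(2n)/{1,-w}`. -/
def JnegW (n : ℕ) : Set (Fin n → ℝ) :=
  {ξ | ∀ lam : Fin n → ℝ, IsNegWWeight n lam → ∃ m : ℤ, ∑ j, lam j * ξ j = m}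


/-!
The canonical sets depend only on the lattice, and in both cases the lattices coincide.
When `n ≡ 2 (mod 4)`, `n/2` is odd, so "`λ_1 + ⋯ + λ_n - n/2` odd" says
"`λ_1 + ⋯ + λ_n` even" and the two families of highest weights coincide. When `n ≡ 0 (mod 4)`,
every integer or half-integer weight pairs integrally with `𝔍_Spin`. Conversely, `n/2` even
makes the weights `(2,…,2,1,0,…,0)` admissible; pairing them with `ξ` gives `2(ξ_1 + ⋯ + ξ_{j-1}) + ξ_j ∈ ℤ`,
whence `ξ ∈ ℤ^n` by induction on `j`. Shifting `(1,0,…,0)` by `1/2` in every coordinate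
gives another admissible weight, and the difference of the two pairings is
`(ξ_1 + ⋯ + ξ_n)/2`, which is therefore an integer.
-/

open Finset

section Weights

variable {n : ℕ}

lemma exists_int_sum_mul_of_mem_JSpin {ξ lam : Fin n → ℝ} (hξ : ξ ∈ JSpin n)
    (hlam : (∀ j, ∃ m : ℤ, lam j = m) ∨ (∀ j, ∃ m : ℤ, lam j = m + 1 / 2)) :
    ∃ m : ℤ, ∑ j, lam j * ξ j = m := by
  obtain ⟨a, ha, t, ht⟩ := hξ
  obtain rfl : ξ = fun j => (a j : ℝ) := funext ha
  rcases hlam with hint | hhalf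
  · choose m hm using hint
    exact ⟨∑ j, m j * a j, by simp [hm]⟩
  · choose m hm using hhalf
    refine ⟨∑ j, m j * a j + t, ?_⟩
    have hsum : ∑ j, (a j : ℝ) = t + t := by exact_mod_cast ht
    simp only [hm, add_mul, sum_add_distrib, one_div, inv_mul_eq_div, ← sum_div, hsum]
    push_cast
    ring

lemma JSpin_subset_JnegW : JSpin n ⊆ JnegW n :=
  fun _ hξ _ hlam => exists_int_sum_mul_of_mem_JSpin hξ hlam.2.2.1

lemma isNegWWeight_of_antitone {lam : Fin n → ℝ} (hanti : Antitone lam)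
    (hnonneg : ∀ k, 0 ≤ lam k)
    (hint : (∀ j, ∃ m : ℤ, lam j = m) ∨ (∀ j, ∃ m : ℤ, lam j = m + 1 / 2))
    (hsum : ∃ m : ℤ, Odd m ∧ ∑ j, lam j = m + (n : ℝ) / 2) :
    IsNegWWeight n lam :=
  ⟨fun _ _ hjk _ => hanti hjk,
    fun j k _ _ => (abs_of_nonneg (hnonneg k)).symm ▸ hanti (Fin.le_def.mpr (by omega)),
    hint, hsum⟩

noncomputable def prefixWeight (j k : Fin n) : ℝ :=
  (if k < j then 2 else 0) + if k = j then 1 else 0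

lemma sum_prefixWeight_mul (j : Fin n) (ξ : Fin n → ℝ) :
    ∑ k, prefixWeight j k * ξ k = 2 * ∑ k ∈ Iio j, ξ k + ξ j := by
  simp only [prefixWeight, add_mul, ite_mul, zero_mul, sum_add_distrib, sum_ite_eq',
    mem_univ, if_true, ← sum_filter, filter_gt_eq_Iio, ← mul_sum, one_mul]

lemma sum_prefixWeight (j : Fin n) : ∑ k, prefixWeight j k = 2 * j + 1 := by
  simpa using sum_prefixWeight_mul j 1

lemma antitone_prefixWeight (j : Fin n) : Antitone (prefixWeight j) := by
  intro a b hab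
  simp only [prefixWeight]
  split_ifs <;> norm_num <;> order

lemma prefixWeight_nonneg (j k : Fin n) : 0 ≤ prefixWeight j k := by
  unfold prefixWeight
  positivity

lemma exists_prefixWeight_eq_intCast (j k : Fin n) : ∃ m : ℤ, prefixWeight j k = m :=
  ⟨(if k < j then 2 else 0) + if k = j then 1 else 0, by simp only [prefixWeight]; push_cast; rfl⟩

lemma isNegWWeight_prefixWeight (h4 : n % 4 = 0) (j : Fin n) :
    IsNegWWeight n (prefixWeight j) := by
  refine isNegWWeight_of_antitone (antitone_prefixWeight j) (prefixWeight_nonneg j)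
    (.inl (exists_prefixWeight_eq_intCast j)) ⟨2 * j + 1 - (n / 2 : ℕ), ?_, ?_⟩
  · rw [Int.odd_iff]
    omega
  · rw [sum_prefixWeight]
    obtain ⟨q, rfl⟩ : ∃ q, n = 2 * q := ⟨n / 2, by omega⟩
    push_cast [Nat.mul_div_cancel_left q two_pos]
    ring

lemma isNegWWeight_prefixWeight_add_half (j : Fin n) :
    IsNegWWeight n (fun k => prefixWeight j k + 1 / 2) := by
  refine isNegWWeight_of_antitone ((antitone_prefixWeight j).add_const _)
    (fun k => by linarith [prefixWeight_nonneg j k])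
    (.inr fun k => (exists_prefixWeight_eq_intCast j k).imp fun m hm => by rw [hm])
    ⟨2 * j + 1, by simp, ?_⟩
  rw [sum_add_distrib, sum_prefixWeight]
  simp
  ring

lemma exists_int_of_prefix_pairings {ξ : Fin n → ℝ}
    (h : ∀ j, ∃ m : ℤ, 2 * ∑ k ∈ Iio j, ξ k + ξ j = m) (j : Fin n) : ∃ a : ℤ, ξ j = a := by
  simp only [eq_comm (a := _ + _), eq_comm (a := ξ _), ← Subring.mem_bot] at h ⊢
  induction j using WellFoundedLT.induction with
  | _ j ih =>
    have hS := Subring.sum_mem ⊥ fun k hk => ih k (mem_Iio.mp hk)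
    convert sub_mem (h j) (add_mem hS hS) using 1
    ring

theorem JnegW_eq_JSpin (hn : 0 < n) (h4 : n % 4 = 0) : JnegW n = JSpin n := by
  refine Set.Subset.antisymm (fun ξ hξ => ?_) JSpin_subset_JnegW
  choose a ha using exists_int_of_prefix_pairings fun j => by
    simpa only [sum_prefixWeight_mul] using hξ _ (isNegWWeight_prefixWeight h4 j)
  refine ⟨a, ha, ?_⟩
  obtain ⟨s, hs⟩ := hξ _ (isNegWWeight_prefixWeight h4 ⟨0, hn⟩)
  obtain ⟨t, ht⟩ := hξ _ (isNegWWeight_prefixWeight_add_half ⟨0, hn⟩)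
  have hsum : ((∑ j, a j : ℤ) : ℝ) = ((t - s + (t - s) : ℤ) : ℝ) := by
    simp only [ha] at hs
    simp only [add_mul, sum_add_distrib, ← mul_sum, ha, hs] at ht
    push_cast
    linarith
  exact ⟨t - s, by exact_mod_cast hsum⟩

lemma exists_odd_add_half_iff_exists_two_mul (h2 : n % 4 = 2) (s : ℝ) :
    (∃ m : ℤ, Odd m ∧ s = m + (n : ℝ) / 2) ↔ ∃ m : ℤ, s = 2 * m := by
  obtain ⟨q, rfl⟩ : ∃ q, n = 2 * (2 * q + 1) := ⟨n / 4, by omega⟩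
  push_cast
  constructor
  · rintro ⟨_, ⟨r, rfl⟩, rfl⟩
    exact ⟨r + q + 1, by push_cast; ring⟩
  · rintro ⟨m, rfl⟩
    exact ⟨2 * (m - q) - 1, by simp, by push_cast; ring⟩

lemma isNegWWeight_iff_isWWeight (h2 : n % 4 = 2) (lam : Fin n → ℝ) :
    IsNegWWeight n lam ↔ IsWWeight n lam := by
  rw [IsNegWWeight, IsWWeight, exists_odd_add_half_iff_exists_two_mul h2]

theorem JnegW_eq_Jw (h2 : n % 4 = 2) : JnegW n = Jw n := by
  ext ξ
  simp only [JnegW, Jw, isNegWWeight_iff_isWWeight h2]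

end Weights

theorem spin_even_quotient_negw_canonical (n : ℕ) (hn : 4 ≤ n)
    (I : Finset ℕ) :
    (n % 4 = 0 →
      ICanonSet n (JnegW n) (Hso n) I = ICanonSet n (JSpin n) (Hso n) I) ∧
    (n % 4 = 2 →
      ICanonSet n (JnegW n) (Hso n) I = ICanonSet n (Jw n) (Hso n) I) :=
  ⟨fun h4 => by rw [JnegW_eq_JSpin (by omega) h4], fun h2 => by rw [JnegW_eq_Jw h2]⟩
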